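/- Let G be a finite simple graph that is the disjoint union of t vertex-disjoint cycles C_{n_1} + C_{n_2} + ⋯ + C_{n_t} (each n_i ≥ 3), and let S be a multiset of positive integers with |S| = |V(G)|. If G is S-fair, then the number of distinct values occurring in S is at most 4t. -/

import Mathlib

open scoped Classical

/-- Sum of labels over the open neighborhood of `v`. -/
noncomputable def nbrSum {V : Type*} [Fintype V] (G : SimpleGraph V) (f : V → ℕ) (v : V) : ℕ :=
  ∑ u : V, if G.Adj v u then f u else 0

/-- `f` is a bijective labeling of `G` by the multiset `S` witnessing fairness constant `k`. -/
def IsFairLabeling {V : Type*} [Fintype V] (G : SimpleGraph V) (S : Multiset ℕ)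
    (f : V → ℕ) (k : ℕ) : Prop :=
  Finset.univ.val.map f = S ∧ ∀ v : V, nbrSum G f v = k

/-- `G` is `S`-fair. -/
def IsFair {V : Type*} [Fintype V] (G : SimpleGraph V) (S : Multiset ℕ) : Prop :=
  ∃ (f : V → ℕ) (k : ℕ), IsFairLabeling G S f k

/-- The disjoint union of `t` cycles `C_{n 0} + ⋯ + C_{n (t-1)}`: within the `i`-th
component, vertex `j` is adjacent to vertex `j + 1 (mod n i)`. -/
def cyclesUnion (t : ℕ) (n : Fin t → ℕ) : SimpleGraph (Σ i : Fin t, Fin (n i)) :=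
  SimpleGraph.fromRel (fun x y =>
    x.1 = y.1 ∧ ((x.2 : ℕ) + 1) % n x.1 = (y.2 : ℕ))

/-!
On a cycle the neighbours of `v + 1` are `v` and `v + 2`, so fairness with constant `k` says
`f v + f (v + 2) = k` all around the cycle. Thus `f (v + 2) = k - f v`, and walking around the
cycle in steps of two from the vertices `0` and `1` shows that every label on it is one of
`f 0, f 1, k - f 0, k - f 1`.
-/

open Fin.CommRing Fin.NatCast

lemma mem_pair_of_add_add_two_eq {h : ℕ → ℕ} {k : ℕ} (hh : ∀ m, h m + h (m + 2) = k)
    (a m : ℕ) : h (a + 2 * m) ∈ ({h a, k - h a} : Finset ℕ) := by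
  induction m with
  | zero => simp
  | succ m ih =>
    have hstep : h (a + 2 * (m + 1)) = k - h (a + 2 * m) := by
      have := hh (a + 2 * m); rw [← Nat.eq_sub_of_add_eq' this]; ring_nf
    have hle : h a ≤ k := Nat.le.intro (hh a)
    simp only [Finset.mem_insert, Finset.mem_singleton] at ih ⊢
    omega

lemma mem_of_add_add_two_eq {h : ℕ → ℕ} {k : ℕ} (hh : ∀ m, h m + h (m + 2) = k) (m : ℕ) :
    h m ∈ ({h 0, h 1, k - h 0, k - h 1} : Finset ℕ) := by
  have := mem_pair_of_add_add_two_eq hh (m % 2) (m / 2)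
  rw [Nat.mod_add_div] at this
  simp only [Finset.mem_insert, Finset.mem_singleton] at this ⊢
  rcases Nat.mod_two_eq_zero_or_one m with hm | hm <;> rw [hm] at this <;> tauto

lemma Fin.mem_of_add_add_two_eq {n : ℕ} [NeZero n] {g : Fin n → ℕ} {k : ℕ}
    (hg : ∀ a, g a + g (a + 2) = k) (a : Fin n) :
    g a ∈ ({g 0, g 1, k - g 0, k - g 1} : Finset ℕ) := by
  have := _root_.mem_of_add_add_two_eq (h := fun m : ℕ => g m)
    (fun m => by simpa only [Nat.cast_add, Nat.cast_ofNat] using hg m) a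
  simpa only [Nat.cast_zero, Nat.cast_one, Fin.cast_val_eq_self] using this

lemma Fin.add_natCast_ne_self {n : ℕ} [NeZero n] {m : ℕ} (h0 : 0 < m) (hm : m < n) (x : Fin n) :
    x + (m : Fin n) ≠ x := by
  intro h
  have := congrArg Fin.val (add_left_cancel (h.trans (add_zero x).symm))
  rw [Fin.val_natCast, Nat.mod_eq_of_lt hm] at this
  exact h0.ne' this

lemma nbrSum_eq_sum_neighborFinset {V : Type*} [Fintype V] (G : SimpleGraph V) (f : V → ℕ)
    (v : V) : nbrSum G f v = ∑ u ∈ G.neighborFinset v, f u := by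
  rw [nbrSum, ← Finset.sum_filter]
  congr 1
  ext u
  simp

namespace cyclesUnion

variable {t : ℕ} {n : Fin t → ℕ}

lemma fst_eq_of_adj {x y : Σ i : Fin t, Fin (n i)} (h : (cyclesUnion t n).Adj x y) :
    x.1 = y.1 := by
  rw [cyclesUnion, SimpleGraph.fromRel_adj] at h
  rcases h with ⟨-, h | h⟩
  · exact h.1
  · exact h.1.symm

lemma adj_mk_mk {i : Fin t} [NeZero (n i)] {a b : Fin (n i)} :
    (cyclesUnion t n).Adj ⟨i, a⟩ ⟨i, b⟩ ↔ a ≠ b ∧ (a + 1 = b ∨ b + 1 = a) := by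
  have hstep : ∀ x y : Fin (n i), ((x : ℕ) + 1) % n i = y ↔ x + 1 = y := by
    intro x y
    rw [Fin.ext_iff, Fin.val_add, Fin.val_one', Nat.add_mod_mod]
  simp [cyclesUnion, SimpleGraph.fromRel_adj, hstep]

lemma neighborFinset_mk_add_one {i : Fin t} [NeZero (n i)] (hn : 3 ≤ n i) (a : Fin (n i)) :
    (cyclesUnion t n).neighborFinset ⟨i, a + 1⟩ = {⟨i, a⟩, ⟨i, a + 2⟩} := by
  have hne : ∀ x : Fin (n i), x + 1 ≠ x := Fin.add_natCast_ne_self (m := 1) one_pos (by omega)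
  have hne₂ : a + 1 ≠ a + 2 := fun h => hne (a + 1) (by rw [show a + 1 + 1 = a + 2 by ring, h])
  ext ⟨j, b⟩
  rw [SimpleGraph.mem_neighborFinset]
  by_cases hj : i = j
  · subst hj
    rw [adj_mk_mk, show a + 1 + 1 = a + 2 by ring]
    simp only [Finset.mem_insert, Finset.mem_singleton, Sigma.mk.inj_iff, heq_eq_eq, true_and]
    constructor
    · rintro ⟨-, h | h⟩
      exacts [Or.inr h.symm, Or.inl (add_right_cancel h)]
    · rintro (rfl | rfl)
      exacts [⟨hne b, Or.inr rfl⟩, ⟨hne₂, Or.inl rfl⟩]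
  · have hnadj : ¬(cyclesUnion t n).Adj ⟨i, a + 1⟩ ⟨j, b⟩ := fun h => hj (fst_eq_of_adj h)
    simp [hnadj, Ne.symm hj]

lemma add_add_two_eq_of_nbrSum_eq {f : (Σ i : Fin t, Fin (n i)) → ℕ} {k : ℕ}
    (hk : ∀ v, nbrSum (cyclesUnion t n) f v = k) {i : Fin t} [NeZero (n i)] (hn : 3 ≤ n i)
    (a : Fin (n i)) : f ⟨i, a⟩ + f ⟨i, a + 2⟩ = k := by
  have hne : (⟨i, a⟩ : Σ i : Fin t, Fin (n i)) ≠ ⟨i, a + 2⟩ := by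
    simpa [eq_comm] using Fin.add_natCast_ne_self (m := 2) two_pos (by omega) a
  rw [← hk ⟨i, a + 1⟩, nbrSum_eq_sum_neighborFinset, neighborFinset_mk_add_one hn,
    Finset.sum_pair hne]

end cyclesUnion

theorem stmt_17_general (t : ℕ) (n : Fin t → ℕ) (hn : ∀ i, 3 ≤ n i)
    (S : Multiset ℕ)
    (hfair : IsFair (cyclesUnion t n) S) :
    S.toFinset.card ≤ 4 * t := by
  obtain ⟨f, k, rfl, hk⟩ := hfair
  have : ∀ i, NeZero (n i) := fun i => ⟨by have := hn i; omega⟩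
  let values : Fin t → Finset ℕ := fun i =>
    {f ⟨i, 0⟩, f ⟨i, 1⟩, k - f ⟨i, 0⟩, k - f ⟨i, 1⟩}
  have hsub : (Finset.univ.val.map f).toFinset ⊆ Finset.univ.biUnion values := by
    rintro _ hx
    obtain ⟨⟨i, a⟩, -, rfl⟩ := Multiset.mem_map.1 (Multiset.mem_toFinset.1 hx)
    exact Finset.mem_biUnion.2 ⟨i, Finset.mem_univ i, Fin.mem_of_add_add_two_eq
      (cyclesUnion.add_add_two_eq_of_nbrSum_eq hk (hn i)) a⟩
  calc _ ≤ (Finset.univ.biUnion values).card := Finset.card_le_card hsub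
    _ ≤ ∑ i, (values i).card := Finset.card_biUnion_le
    _ ≤ ∑ _i : Fin t, 4 := Finset.sum_le_sum fun i _ => Finset.card_le_four
    _ = 4 * t := by simp [mul_comm]

/-- if a disjoint union of `t` cycles is `S`-fair, then `S` has at most
`4t` distinct values. -/
theorem stmt_17 (t : ℕ) (n : Fin t → ℕ) (hn : ∀ i, 3 ≤ n i)
    (S : Multiset ℕ) (hSpos : ∀ s ∈ S, 0 < s)
    (hScard : Multiset.card S = ∑ i : Fin t, n i)
    (hfair : IsFair (cyclesUnion t n) S) :
    S.toFinset.card ≤ 4 * t :=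
  stmt_17_general t n hn S hfair
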